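/- arXiv:2003.07009 — 4 statements merged into one kernel-verified Lean document; each statement's English description precedes it below -/
import Mathlib

section
/- If x, y ∈ ℝⁿ are nonnegative vectors in decreasing sorted order and x strictly dominates y (every prefix sum of x strictly exceeds that of y), then there exists a doubly stochastic n×n matrix P such that (Px)ᵢ > yᵢ for every i. -/
/-!
By a small constant perturbation of `y`, it suffices to get `y ≤ P x` under non-strict prefix
domination. That is done by induction on `n`. If some `x j ≤ y 0`, take the first such `j`;
since `x j ≤ y 0 ≤ x 0`, a convex combination of the identity and the transposition `(0 j)` moves
`x 0` exactly to `y 0` without changing any prefix sum that contains `j`, while all earlier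
coordinates exceed `y 0 ≥ y i`. So the tails of `x` and `y` again satisfy prefix domination, and
`diag(1, Q)` with `Q` from the induction hypothesis finishes the construction.
-/

open Finset Matrix

theorem Fin.sum_Iic_succ {M : Type*} [AddCommMonoid M] {m : ℕ} (f : Fin (m + 1) → M)
    (k : Fin m) : ∑ i ∈ Iic k.succ, f i = f 0 + ∑ i ∈ Iic k, f i.succ := by
  rw [← Finset.Icc_bot, bot_eq_zero, ← Finset.add_sum_Ioc_eq_sum_Icc (Fin.zero_le _),
    ← Fin.map_succEmb_Iic, Finset.sum_map]
  rfl

namespace Matrix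

section fixZeroExtend

variable {R : Type*} [Semiring R] {m : ℕ}

/-- The block matrix `diag(1, Q)`. -/
def fixZeroExtend (Q : Matrix (Fin m) (Fin m) R) : Matrix (Fin (m + 1)) (Fin (m + 1)) R :=
  Fin.cons (Fin.cons 1 0) fun i => Fin.cons 0 (Q i)

theorem fixZeroExtend_mulVec (Q : Matrix (Fin m) (Fin m) R) (v : Fin (m + 1) → R) :
    fixZeroExtend Q *ᵥ v = Fin.cons (v 0) (Q *ᵥ Fin.tail v) := by
  ext i
  cases i using Fin.cases <;> simp [fixZeroExtend, mulVec, dotProduct, Fin.sum_univ_succ, Fin.tail]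

theorem fixZeroExtend_mem_doublyStochastic [PartialOrder R] [IsOrderedRing R]
    {Q : Matrix (Fin m) (Fin m) R} (hQ : Q ∈ doublyStochastic R (Fin m)) :
    fixZeroExtend Q ∈ doublyStochastic R (Fin (m + 1)) := by
  rw [mem_doublyStochastic_iff_sum] at hQ ⊢
  obtain ⟨hnonneg, hrow, hcol⟩ := hQ
  refine ⟨fun i j => ?_, fun i => ?_, fun j => ?_⟩
  · cases i using Fin.cases <;> cases j using Fin.cases <;> simp [fixZeroExtend, hnonneg]
  · cases i using Fin.cases <;> simp [fixZeroExtend, Fin.sum_univ_succ, hrow]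
  · cases j using Fin.cases <;> simp [fixZeroExtend, Fin.sum_univ_succ, hcol]

end fixZeroExtend

theorem exists_mem_doublyStochastic_mulVec_eq {R n : Type*} [CommRing R] [PartialOrder R]
    [IsOrderedRing R] [Fintype n] [DecidableEq n] (x : n → R) (σ : Equiv.Perm n) {a b : R}
    (ha : 0 ≤ a) (hb : 0 ≤ b) (hab : a + b = 1) :
    ∃ P ∈ doublyStochastic R n, P *ᵥ x = a • x + b • (x ∘ σ) :=
  ⟨a • 1 + b • σ.permMatrix R,
    convex_doublyStochastic (one_mem _) permMatrix_mem_doublyStochastic ha hb hab, by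
    rw [add_mulVec, smul_mulVec, smul_mulVec, one_mulVec, permMatrix_mulVec]⟩

variable {R : Type*} [Field R] [LinearOrder R] [IsStrictOrderedRing R]

theorem exists_mem_doublyStochastic_head_le_and_tail_prefix_le {m : ℕ}
    (x y : Fin (m + 1) → R) (hy : Antitone y)
    (h : ∀ k, ∑ i ∈ Iic k, y i ≤ ∑ i ∈ Iic k, x i) :
    ∃ P ∈ doublyStochastic R (Fin (m + 1)), y 0 ≤ (P *ᵥ x) 0 ∧
      ∀ k : Fin m, ∑ i ∈ Iic k, y i.succ ≤ ∑ i ∈ Iic k, (P *ᵥ x) i.succ := by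
  by_cases hlarge : ∀ i, y 0 < x i
  · refine ⟨1, one_mem _, ?_, fun k => sum_le_sum fun i _ => ?_⟩ <;> rw [one_mulVec]
    exacts [(hlarge 0).le, (hy (Fin.zero_le _)).trans (hlarge _).le]
  push Not at hlarge
  obtain ⟨j, hj, hmin⟩ := WellFounded.has_min wellFounded_lt {j | x j ≤ y 0} hlarge
  have hx0 : y 0 ≤ x 0 := by
    have := h 0
    rwa [← bot_eq_zero, Iic_bot, sum_singleton, sum_singleton] at this
  obtain ⟨a, b, ha, hb, hab, hz0⟩ : y 0 ∈ segment R (x 0) (x j) := by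
    rw [segment_eq_uIcc]
    exact Set.mem_uIcc.2 (Or.inr ⟨hj, hx0⟩)
  rw [smul_eq_mul, smul_eq_mul] at hz0
  obtain ⟨P, hP, hPx⟩ := exists_mem_doublyStochastic_mulVec_eq x (Equiv.swap 0 j) ha hb hab
  refine ⟨P, hP, by simp [hPx, hz0], fun k => ?_⟩
  rcases le_or_gt j k.succ with hjk | hkj
  · have hswap : ∑ i ∈ Iic k.succ, x (Equiv.swap 0 j i) = ∑ i ∈ Iic k.succ, x i := by
      refine Equiv.Perm.sum_comp _ _ _ fun i hi => ?_
      rcases (Equiv.swap_apply_ne_self_iff.1 hi).2 with rfl | rfl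
      exacts [mem_Iic.2 (Fin.zero_le _), mem_Iic.2 hjk]
    have hsum : ∑ i ∈ Iic k.succ, (P *ᵥ x) i = ∑ i ∈ Iic k.succ, x i := by
      simp [hPx, sum_add_distrib, ← mul_sum, hswap, ← add_mul, hab]
    have := h k.succ
    rw [← hsum, Fin.sum_Iic_succ, Fin.sum_Iic_succ, show (P *ᵥ x) 0 = y 0 by simp [hPx, hz0]]
      at this
    linarith
  · refine sum_le_sum fun i hi => ?_
    have hij : i.succ < j := lt_of_le_of_lt (Fin.succ_le_succ_iff.2 (mem_Iic.1 hi)) hkj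
    have hfix : Equiv.swap 0 j i.succ = i.succ :=
      Equiv.swap_apply_of_ne_of_ne (Fin.succ_ne_zero i) hij.ne
    have hxi : y 0 < x i.succ := not_le.1 fun hle => hmin _ hle hij
    simp only [hPx, Pi.add_apply, Pi.smul_apply, Function.comp_apply, hfix, smul_eq_mul,
      ← add_mul, hab, one_mul]
    exact (hy (Fin.zero_le _)).trans hxi.le

theorem exists_mem_doublyStochastic_le_mulVec :
    ∀ {n : ℕ} (x y : Fin n → R), Antitone y → (∀ k, ∑ i ∈ Iic k, y i ≤ ∑ i ∈ Iic k, x i) →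
      ∃ P ∈ doublyStochastic R (Fin n), y ≤ P *ᵥ x
  | 0, _, _, _, _ => ⟨1, one_mem _, fun i => i.elim0⟩
  | _ + 1, x, y, hy, h => by
    obtain ⟨P, hP, hhead, htail⟩ := exists_mem_doublyStochastic_head_le_and_tail_prefix_le x y hy h
    obtain ⟨Q, hQ, hQle⟩ := exists_mem_doublyStochastic_le_mulVec (Fin.tail (P *ᵥ x))
      (Fin.tail y) (hy.comp_monotone (Fin.strictMono_succ.monotone)) htail
    refine ⟨fixZeroExtend Q * P, mul_mem (fixZeroExtend_mem_doublyStochastic hQ) hP, fun i => ?_⟩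
    rw [← mulVec_mulVec, fixZeroExtend_mulVec]
    cases i using Fin.cases
    · simpa using hhead
    · exact hQle _

end Matrix

open Filter Topology

theorem stmt_4_general (n : ℕ) (x y : Fin n → ℝ)
    (hysort : ∀ i j : Fin n, i ≤ j → y j ≤ y i)
    (hdom : ∀ k : Fin n, ∑ i ∈ univ.filter (· ≤ k), y i < ∑ i ∈ univ.filter (· ≤ k), x i) :
    ∃ P : Matrix (Fin n) (Fin n) ℝ,
      (∀ i j, 0 ≤ P i j) ∧ (∀ i, ∑ j, P i j = 1) ∧ (∀ j, ∑ i, P i j = 1) ∧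
        ∀ i, y i < (P.mulVec x) i := by
  simp only [filter_ge_eq_Iic] at hdom
  have hnear : ∀ᶠ ε in 𝓝 (0 : ℝ), ∀ k, ∑ i ∈ Iic k, (y i + ε) < ∑ i ∈ Iic k, x i :=
    eventually_all.2 fun k => ContinuousAt.eventually_lt (by fun_prop) continuousAt_const
      (by simpa using hdom k)
  obtain ⟨ε, hε, hεpos⟩ :=
    ((hnear.filter_mono nhdsWithin_le_nhds).and (self_mem_nhdsWithin (s := Set.Ioi 0))).exists
  obtain ⟨P, hP, hle⟩ := exists_mem_doublyStochastic_le_mulVec x (fun i => y i + ε)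
    (fun i j hij => by simpa using hysort i j hij) fun k => (hε k).le
  rw [mem_doublyStochastic_iff_sum] at hP
  exact ⟨P, hP.1, hP.2.1, hP.2.2, fun i => (lt_add_of_pos_right _ hεpos).trans_le (hle i)⟩

theorem stmt_4 (n : ℕ) (x y : Fin n → ℝ)
    (hx0 : ∀ i, 0 ≤ x i) (hy0 : ∀ i, 0 ≤ y i)
    (hxsort : ∀ i j : Fin n, i ≤ j → x j ≤ x i)
    (hysort : ∀ i j : Fin n, i ≤ j → y j ≤ y i)
    (hdom : ∀ k : Fin n, ∑ i ∈ univ.filter (· ≤ k), y i < ∑ i ∈ univ.filter (· ≤ k), x i) :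
    ∃ P : Matrix (Fin n) (Fin n) ℝ,
      (∀ i j, 0 ≤ P i j) ∧ (∀ i, ∑ j, P i j = 1) ∧ (∀ j, ∑ i, P i j = 1) ∧
        ∀ i, y i < (P.mulVec x) i :=
  stmt_4_general n x y hysort hdom
end

section
/- Let X₁, …, Xₙ be independent random variables and Z_k = X₁ + ⋯ + X_k. Then for any x ≥ 0, P(max_{1≤k≤n} |Z_k| ≥ 3x) ≤ 3 · max_{1≤k≤n} P(|Z_k| ≥ x). -/
/-!
Let `A_k` be the event that `|Z_k| ≥ 3x` for the first time at time `k`. On `A_k`, either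
`|Z_n| ≥ x` or the tail `Z_n - Z_k` has `|Z_n - Z_k| ≥ 2x`. The tail is independent of `A_k`, and
`P(|Z_n - Z_k| ≥ 2x) ≤ P(|Z_n| ≥ x) + P(|Z_k| ≥ x) ≤ 2M`, with `M = max_k P(|Z_k| ≥ x)`. Summing
over the disjoint `A_k` gives `P(max_k |Z_k| ≥ 3x) ≤ P(|Z_n| ≥ x) + 2M ≤ 3M`.
-/

open MeasureTheory ProbabilityTheory Finset Function

open scoped ENNReal

theorem le_abs_or_le_abs_of_add_le_abs_sub {α : Type*} [AddCommGroup α] [LinearOrder α]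
    [IsOrderedAddMonoid α] {a b x y : α} (h : x + y ≤ |a - b|) : x ≤ |a| ∨ y ≤ |b| := by
  by_contra! ⟨ha, hb⟩
  exact (add_lt_add ha hb).not_ge (h.trans (abs_sub a b))

theorem measurableSet_disjointed {Ω ι : Type*} {mΩ : MeasurableSpace Ω} [Preorder ι]
    [LocallyFiniteOrderBot ι] {f : ι → Set Ω} {i : ι} (hf : ∀ j ≤ i, MeasurableSet (f j)) :
    MeasurableSet (disjointed f i) := by
  rw [disjointed_apply, Finset.sup_set_eq_biUnion]
  exact (hf i le_rfl).diff <| Finset.measurableSet_biUnion _ fun j hj ↦ hf j (mem_Iio.1 hj).le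

section

variable {Ω : Type*} {mΩ : MeasurableSpace Ω} {μ : Measure Ω}

theorem measure_le_abs_sub_le_add (f g : Ω → ℝ) (x y : ℝ) :
    μ {ω | x + y ≤ |f ω - g ω|} ≤ μ {ω | x ≤ |f ω|} + μ {ω | y ≤ |g ω|} :=
  calc μ {ω | x + y ≤ |f ω - g ω|} ≤ μ ({ω | x ≤ |f ω|} ∪ {ω | y ≤ |g ω|}) :=
        measure_mono fun ω (hω : x + y ≤ |f ω - g ω|) ↦ le_abs_or_le_abs_of_add_le_abs_sub hω
    _ ≤ μ {ω | x ≤ |f ω|} + μ {ω | y ≤ |g ω|} := measure_union_le _ _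

theorem measure_iUnion_le_add_of_subset_union {ι : Type*} [Countable ι] [IsProbabilityMeasure μ]
    {A D : ι → Set Ω} {S : Set Ω} {c : ℝ≥0∞} (hA : ∀ k, MeasurableSet (A k))
    (hdisj : Pairwise (Disjoint on A)) (hcover : ∀ k, A k ⊆ S ∪ D k)
    (hD : ∀ k, μ (A k ∩ D k) ≤ μ (A k) * c) :
    μ (⋃ k, A k) ≤ μ S + c := by
  have hsplit (k : ι) : μ (A k) ≤ μ (A k ∩ S) + μ (A k) * c :=
    calc μ (A k) ≤ μ (A k ∩ S ∪ A k ∩ D k) :=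
          measure_mono <| Set.inter_union_distrib_left _ _ _ ▸ Set.subset_inter le_rfl (hcover k)
      _ ≤ μ (A k ∩ S) + μ (A k ∩ D k) := measure_union_le _ _
      _ ≤ μ (A k ∩ S) + μ (A k) * c := by gcongr; exact hD k
  have hS : ∑' k, μ (A k ∩ S) ≤ μ S := by
    simpa only [Measure.restrict_apply (hA _), Measure.restrict_apply_univ] using
      tsum_measure_le_measure_univ (μ := μ.restrict S) (fun k ↦ (hA k).nullMeasurableSet)
        (hdisj.mono fun _ _ h ↦ h.aedisjoint)
  have hone : ∑' k, μ (A k) ≤ 1 := measure_iUnion hdisj hA ▸ prob_le_one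
  calc μ (⋃ k, A k) = ∑' k, μ (A k) := measure_iUnion hdisj hA
    _ ≤ ∑' k, (μ (A k ∩ S) + μ (A k) * c) := ENNReal.tsum_le_tsum hsplit
    _ = ∑' k, μ (A k ∩ S) + (∑' k, μ (A k)) * c := by
        rw [ENNReal.tsum_add, ENNReal.tsum_mul_right]
    _ ≤ μ S + 1 * c := by gcongr
    _ = μ S + c := by rw [one_mul]

namespace ProbabilityTheory

theorem measurable_sum_iSup_comap {ι β : Type*} {mβ : MeasurableSpace β} [AddCommMonoid β]
    [MeasurableAdd₂ β] {X : ι → Ω → β} {S : Set ι} {s : Finset ι} (hs : ↑s ⊆ S) :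
    Measurable[⨆ i ∈ S, mβ.comap (X i)] fun ω ↦ ∑ i ∈ s, X i ω :=
  Finset.measurable_sum _ fun i hi ↦ (comap_measurable (X i)).mono
    (le_iSup₂ (f := fun j (_ : j ∈ S) ↦ mβ.comap (X j)) i (hs hi)) le_rfl

theorem iIndepFun.indepSet_of_measurableSet_iSup {ι β : Type*} {mβ : MeasurableSpace β}
    {X : ι → Ω → β} (hX : iIndepFun X μ) (hmeas : ∀ i, Measurable (X i)) {S T : Set ι}
    (hST : Disjoint S T) {A B : Set Ω} (hA : MeasurableSet[⨆ i ∈ S, mβ.comap (X i)] A)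
    (hB : MeasurableSet[⨆ i ∈ T, mβ.comap (X i)] B) : IndepSet A B μ :=
  (indep_iSup_of_disjoint (fun i ↦ (hmeas i).comap_le) ((iIndepFun_iff_iIndep _ _ _).1 hX)
    hST).indepSet_of_measurableSet hA hB

/-- `k : Fin n` indexes the partial sum `Z (k + 1) = X 0 + ⋯ + X k`, so that `k + 1` runs over
`[1, n]`. -/
def absPartialSumGe (X : ℕ → Ω → ℝ) (n : ℕ) (c : ℝ) (k : Fin n) : Set Ω :=
  {ω | c ≤ |∑ i ∈ range ((k : ℕ) + 1), X i ω|}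

def absTailSumGe (X : ℕ → Ω → ℝ) (n : ℕ) (c : ℝ) (k : Fin n) : Set Ω :=
  {ω | c ≤ |∑ i ∈ Ico ((k : ℕ) + 1) n, X i ω|}

variable {X : ℕ → Ω → ℝ} {n : ℕ}

theorem setOf_exists_le_abs_sum_eq_iUnion (c : ℝ) :
    {ω | ∃ k ∈ Icc 1 n, c ≤ |∑ i ∈ range k, X i ω|} = ⋃ k, absPartialSumGe X n c k := by
  ext ω
  simp only [absPartialSumGe, Set.mem_ofPred_eq, Set.mem_iUnion, mem_Icc]
  constructor
  · rintro ⟨k, ⟨hk1, hkn⟩, hk⟩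
    exact ⟨⟨k - 1, by omega⟩, by simpa [Nat.sub_add_cancel hk1] using hk⟩
  · rintro ⟨k, hk⟩
    exact ⟨k + 1, ⟨le_add_self, k.isLt⟩, hk⟩

theorem measurableSet_disjointed_absPartialSumGe (c : ℝ) (k : Fin n) :
    MeasurableSet[⨆ i ∈ Set.Iic (k : ℕ), MeasurableSpace.comap (X i) inferInstance]
      (disjointed (absPartialSumGe X n c) k) :=
  measurableSet_disjointed fun j hj ↦
    (measurable_abs.comp <| measurable_sum_iSup_comap fun i hi ↦ by
      simp only [coe_range, Set.mem_Iio, Set.mem_Iic] at hi ⊢; omega) measurableSet_Ici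

theorem measurableSet_absTailSumGe (c : ℝ) (k : Fin n) :
    MeasurableSet[⨆ i ∈ Set.Ioi (k : ℕ), MeasurableSpace.comap (X i) inferInstance]
      (absTailSumGe X n c k) :=
  (measurable_abs.comp <| measurable_sum_iSup_comap fun i hi ↦ by
    simp only [coe_Ico, Set.mem_Ico, Set.mem_Ioi] at hi ⊢; omega) measurableSet_Ici

theorem absPartialSumGe_subset_union (x y : ℝ) (k : Fin n) :
    absPartialSumGe X n (x + y) k ⊆ {ω | x ≤ |∑ i ∈ range n, X i ω|} ∪ absTailSumGe X n y k := by
  intro ω (hω : x + y ≤ |∑ i ∈ range ((k : ℕ) + 1), X i ω|)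
  rw [← sub_sub_cancel (∑ i ∈ range n, X i ω) (∑ i ∈ range ((k : ℕ) + 1), X i ω),
    ← sum_Ico_eq_sub _ k.isLt] at hω
  exact le_abs_or_le_abs_of_add_le_abs_sub hω

theorem measure_absTailSumGe_le (x y : ℝ) (k : Fin n) :
    μ (absTailSumGe X n (x + y) k) ≤
      μ {ω | x ≤ |∑ i ∈ range n, X i ω|} + μ {ω | y ≤ |∑ i ∈ range ((k : ℕ) + 1), X i ω|} := by
  simp only [absTailSumGe, sum_Ico_eq_sub _ k.isLt]
  exact measure_le_abs_sub_le_add _ _ x y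

theorem iIndepFun.measure_disjointed_absPartialSumGe_inter_absTailSumGe (hX : iIndepFun X μ)
    (hmeas : ∀ i, Measurable (X i)) (c c' : ℝ) (k : Fin n) :
    μ (disjointed (absPartialSumGe X n c) k ∩ absTailSumGe X n c' k) =
      μ (disjointed (absPartialSumGe X n c) k) * μ (absTailSumGe X n c' k) :=
  (hX.indepSet_of_measurableSet_iSup hmeas (Set.Iic_disjoint_Ioi le_rfl)
    (measurableSet_disjointed_absPartialSumGe c k)
    (measurableSet_absTailSumGe c' k)).measure_inter_eq_mul

end ProbabilityTheory

end

theorem stmt_9 (Ω : Type) (_ : MeasurableSpace Ω) (μ : Measure Ω)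
    [IsProbabilityMeasure μ] (n : ℕ) (X : ℕ → Ω → ℝ)
    (hmeas : ∀ i, Measurable (X i))
    (hindep : ProbabilityTheory.iIndepFun X μ)
    (x : ℝ) :
    μ {ω | ∃ k ∈ Icc 1 n, 3 * x ≤ |∑ i ∈ range k, X i ω|} ≤
      3 * (Icc 1 n).sup (fun k => μ {ω | x ≤ |∑ i ∈ range k, X i ω|}) := by
  set M := (Icc 1 n).sup fun k ↦ μ {ω | x ≤ |∑ i ∈ range k, X i ω|}
  have hM {k : ℕ} (h1 : 1 ≤ k) (hn : k ≤ n) : μ {ω | x ≤ |∑ i ∈ range k, X i ω|} ≤ M :=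
    le_sup (f := fun k ↦ μ {ω | x ≤ |∑ i ∈ range k, X i ω|}) (mem_Icc.2 ⟨h1, hn⟩)
  rcases Nat.eq_zero_or_pos n with rfl | hn
  · simp
  rw [setOf_exists_le_abs_sum_eq_iUnion, show 3 * x = x + 2 * x by ring, ← iUnion_disjointed]
  calc μ (⋃ k, disjointed (absPartialSumGe X n (x + 2 * x)) k)
      ≤ μ {ω | x ≤ |∑ i ∈ range n, X i ω|} + (M + M) := by
        refine measure_iUnion_le_add_of_subset_union (D := absTailSumGe X n (2 * x))
          (fun k ↦ iSup₂_le (fun i _ ↦ (hmeas i).comap_le) _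
            (measurableSet_disjointed_absPartialSumGe _ k))
          (disjoint_disjointed _)
          (fun k ↦ (disjointed_subset _ k).trans (absPartialSumGe_subset_union _ _ k))
          (fun k ↦ ?_)
        rw [hindep.measure_disjointed_absPartialSumGe_inter_absTailSumGe hmeas, two_mul]
        gcongr
        exact (measure_absTailSumGe_le x x k).trans
          (add_le_add (hM hn le_rfl) (hM le_add_self k.isLt))
    _ ≤ M + (M + M) := by gcongr; exact hM hn le_rfl
    _ = 3 * M := by ring
end

section
/- Let X₁, …, Xₙ be i.i.d. geometric random variables with parameter λ ∈ (0,1] (so E[Xᵢ] = 1/λ), let Z_j = X₁ + ⋯ + X_j, and let ε ∈ [0,1]. Then P(max_{1≤j≤n} |Z_j − j/λ| > εn/λ) ≤ 6·exp(−ε²n/36). -/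
/-!
For `|t| ≤ λ/3` the geometric moment generating function satisfies
`E e^{tX} = λ e^t / (1 - (1 - λ) e^t) ≤ exp (t/λ + (t/λ)²)`. For independent `Xᵢ` the
normalised products `∏_{i<j} e^{t Xᵢ} / E e^{t Xᵢ}` form a nonnegative martingale of mean one, so
Doob's maximal inequality bounds the probability that `t (Z_j - j/λ) ≥ a` for some `j ≤ n` by
`exp (-a + n (t/λ)²)`. Taking `t = ±ελ/3` and `a = ε²n/3` bounds the two-sided event by
`2 exp (-2ε²n/9)`.
-/

open MeasureTheory Finset Real ProbabilityTheory
open scoped ENNReal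

lemma inv_one_sub_le_exp_add_sq {r : ℝ} (hr : |r| ≤ 1 / 3) : (1 - r)⁻¹ ≤ exp (r + r ^ 2) := by
  obtain ⟨hr₁, hr₂⟩ := abs_le.mp hr
  have key : 1 ≤ (1 - r) * exp (r + r ^ 2) := by
    rcases le_or_gt 0 r with h | h
    · nlinarith [quadratic_le_exp_of_nonneg (x := r + r ^ 2) (by positivity),
        mul_nonneg h (sq_nonneg r)]
    · nlinarith [add_one_le_exp (r + r ^ 2)]
  rwa [inv_le_iff_one_le_mul₀ (by linarith), mul_comm]

lemma geometric_mgf_le_exp {lam t : ℝ} (hlam : 0 < lam) (ht : |t| ≤ lam / 3) :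
    0 < 1 - (1 - lam) * exp t ∧
      lam * exp t / (1 - (1 - lam) * exp t) ≤ exp (t / lam + (t / lam) ^ 2) := by
  obtain ⟨ht₁, ht₂⟩ := abs_le.mp ht
  have hden : lam - t ≤ exp (-t) - (1 - lam) := by linarith [add_one_le_exp (-t)]
  have hsplit : 1 - (1 - lam) * exp t = exp t * (exp (-t) - (1 - lam)) := by
    rw [mul_sub, ← exp_add, add_neg_cancel, exp_zero]; ring
  have hpos : 0 < exp (-t) - (1 - lam) := by linarith
  refine ⟨hsplit ▸ mul_pos (exp_pos t) hpos, ?_⟩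
  have hr : |t / lam| ≤ 1 / 3 := by
    rw [abs_div, abs_of_pos hlam, div_le_iff₀ hlam]; linarith
  calc lam * exp t / (1 - (1 - lam) * exp t) = lam / (exp (-t) - (1 - lam)) := by
        rw [hsplit, mul_comm lam, mul_div_mul_left _ _ (exp_pos t).ne']
    _ ≤ lam / (lam - t) := div_le_div_of_nonneg_left hlam.le (by linarith) hden
    _ = (1 - t / lam)⁻¹ := by field_simp
    _ ≤ exp (t / lam + (t / lam) ^ 2) := inv_one_sub_le_exp_add_sq hr

section Geometric

variable {Ω : Type*} [MeasurableSpace Ω] {μ : Measure Ω}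

lemma lintegral_comp_eq_tsum {α : Type*} [Countable α] [MeasurableSpace α]
    [MeasurableSingletonClass α] {X : Ω → α} (hX : Measurable X) (f : α → ℝ≥0∞) :
    ∫⁻ ω, f (X ω) ∂μ = ∑' a, f a * μ {ω | X ω = a} := by
  rw [← lintegral_map (measurable_of_countable f) hX, lintegral_countable']
  refine tsum_congr fun a => ?_
  rw [Measure.map_apply hX (measurableSet_singleton a)]; rfl

def HasGeometricLaw (μ : Measure Ω) (X : Ω → ℕ) (lam : ℝ) : Prop :=
  ∀ j : ℕ, 1 ≤ j → μ {ω | X ω = j} = ENNReal.ofReal (lam * (1 - lam) ^ (j - 1))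

variable {X : Ω → ℕ} {lam : ℝ}

lemma tsum_exp_mul_geometric (hgeom : HasGeometricLaw μ X lam) (hlam : 0 < lam)
    (hlam₁ : lam ≤ 1) {t : ℝ} (ht : (1 - lam) * exp t < 1) :
    ∑' j : ℕ, ENNReal.ofReal (exp (t * (j + 1 : ℕ))) * μ {ω | X ω = j + 1} =
      ENNReal.ofReal (lam * exp t / (1 - (1 - lam) * exp t)) := by
  have hρ : 0 ≤ (1 - lam) * exp t := mul_nonneg (by linarith) (exp_pos t).le
  have hterm : ∀ j : ℕ, ENNReal.ofReal (exp (t * (j + 1 : ℕ))) * μ {ω | X ω = j + 1} =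
      ENNReal.ofReal (lam * exp t * ((1 - lam) * exp t) ^ j) := by
    intro j
    rw [hgeom _ (Nat.le_add_left 1 j), ← ENNReal.ofReal_mul (exp_pos _).le, Nat.add_sub_cancel,
      Nat.cast_succ, mul_add_one, exp_add, mul_comm t, exp_nat_mul, mul_pow]
    congr 1
    ring
  simp_rw [hterm]
  rw [← ENNReal.ofReal_tsum_of_nonneg (fun j => by positivity)
    ((summable_geometric_of_lt_one hρ ht).mul_left _), tsum_mul_left,
    tsum_geometric_of_lt_one hρ ht, div_eq_mul_inv]

lemma measure_eq_zero_of_geometric (hgeom : HasGeometricLaw μ X lam) (hX : Measurable X)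
    [IsProbabilityMeasure μ] (hlam : 0 < lam) (hlam₁ : lam ≤ 1) : μ {ω | X ω = 0} = 0 := by
  have htotal := lintegral_comp_eq_tsum (μ := μ) hX fun _ => 1
  have htail := tsum_exp_mul_geometric hgeom hlam hlam₁ (t := 0) (by simp; linarith)
  simp only [zero_mul, exp_zero, ENNReal.ofReal_one, one_mul, mul_one, lintegral_const,
    measure_univ] at htotal htail
  rw [tsum_eq_zero_add' ENNReal.summable, htail, sub_sub_cancel, div_self hlam.ne',
    ENNReal.ofReal_one] at htotal
  exact (ENNReal.add_left_inj ENNReal.one_ne_top).mp (htotal.symm.trans (zero_add 1).symm)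

lemma lintegral_exp_mul_geometric (hgeom : HasGeometricLaw μ X lam) (hX : Measurable X)
    [IsProbabilityMeasure μ] (hlam : 0 < lam) (hlam₁ : lam ≤ 1) {t : ℝ}
    (ht : (1 - lam) * exp t < 1) :
    ∫⁻ ω, ENNReal.ofReal (exp (t * X ω)) ∂μ =
      ENNReal.ofReal (lam * exp t / (1 - (1 - lam) * exp t)) := by
  rw [lintegral_comp_eq_tsum (f := fun j : ℕ => ENNReal.ofReal (exp (t * j))) hX,
    tsum_eq_zero_add' ENNReal.summable, measure_eq_zero_of_geometric hgeom hX hlam hlam₁,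
    mul_zero, zero_add, tsum_exp_mul_geometric hgeom hlam hlam₁ ht]

lemma integrable_exp_mul_geometric (hgeom : HasGeometricLaw μ X lam) (hX : Measurable X)
    [IsProbabilityMeasure μ] (hlam : 0 < lam) (hlam₁ : lam ≤ 1) {t : ℝ}
    (ht : (1 - lam) * exp t < 1) :
    Integrable (fun ω => exp (t * X ω)) μ := by
  refine ⟨by fun_prop, ?_⟩
  rw [hasFiniteIntegral_iff_ofReal (ae_of_all _ fun ω => (exp_pos _).le),
    lintegral_exp_mul_geometric hgeom hX hlam hlam₁ ht]
  exact ENNReal.ofReal_lt_top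

lemma mgf_geometric (hgeom : HasGeometricLaw μ X lam) (hX : Measurable X)
    [IsProbabilityMeasure μ] (hlam : 0 < lam) (hlam₁ : lam ≤ 1) {t : ℝ}
    (ht : (1 - lam) * exp t < 1) :
    mgf (fun ω => (X ω : ℝ)) μ t = lam * exp t / (1 - (1 - lam) * exp t) := by
  rw [mgf, integral_eq_lintegral_of_nonneg_ae (ae_of_all _ fun ω => (exp_pos _).le) (by fun_prop),
    lintegral_exp_mul_geometric hgeom hX hlam hlam₁ ht, ENNReal.toReal_ofReal]
  exact div_nonneg (by positivity) (by linarith)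

lemma mgf_geometric_le (hgeom : HasGeometricLaw μ X lam) (hX : Measurable X)
    [IsProbabilityMeasure μ] (hlam : 0 < lam) (hlam₁ : lam ≤ 1) {t : ℝ} (ht : |t| ≤ lam / 3) :
    Integrable (fun ω => exp (t * X ω)) μ ∧
      mgf (fun ω => (X ω : ℝ)) μ t ≤ exp (t * lam⁻¹ + (t / lam) ^ 2) := by
  obtain ⟨hden, hle⟩ := geometric_mgf_le_exp hlam ht
  have hρ : (1 - lam) * exp t < 1 := by linarith
  refine ⟨integrable_exp_mul_geometric hgeom hX hlam hlam₁ hρ, ?_⟩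
  rwa [mgf_geometric hgeom hX hlam hlam₁ hρ, ← div_eq_mul_inv]

end Geometric

namespace ProbabilityTheory

variable {Ω : Type*} [MeasurableSpace Ω] {μ : Measure Ω} [IsProbabilityMeasure μ]
  {Z : ℕ → Ω → ℝ}

lemma iIndepFun.integrable_prod_range (hZ : ∀ i, Measurable (Z i)) (hind : iIndepFun Z μ)
    (hint : ∀ i, Integrable (Z i) μ) (n : ℕ) : Integrable (∏ i ∈ range n, Z i) μ := by
  induction n with
  | zero => exact integrable_const (1 : ℝ)
  | succ n ih =>
    rw [prod_range_succ]
    exact (hind.indepFun_prod_range_succ hZ n).integrable_mul ih (hint n)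

lemma iIndepFun.martingale_prod_range (hZ : ∀ i, StronglyMeasurable (Z i))
    (hind : iIndepFun Z μ) (hint : ∀ i, Integrable (Z i) μ) (hmean : ∀ i, μ[Z i] = 1) :
    Martingale (fun k => ∏ i ∈ range (k + 1), Z i) (Filtration.natural Z hZ) μ := by
  have hprod_int := hind.integrable_prod_range (fun i => (hZ i).measurable) hint
  have hadapted : StronglyAdapted (Filtration.natural Z hZ) fun k => ∏ i ∈ range (k + 1), Z i :=
    fun k => Finset.stronglyMeasurable_prod _ fun i hi =>
      (Filtration.stronglyAdapted_natural hZ i).mono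
        (Filtration.mono _ (Nat.lt_succ_iff.mp (mem_range.mp hi)))
  refine martingale_nat hadapted (fun k => hprod_int _) fun k => ?_
  have hnext : μ[Z (k + 1) | Filtration.natural Z hZ k] =ᵐ[μ] fun _ => 1 :=
    (hind.condExp_natural_ae_eq_of_lt hZ k.lt_succ_self).trans (by simp [hmean])
  have hsplit := condExp_mul_of_stronglyMeasurable_left (hadapted k)
    (prod_range_succ Z (k + 1) ▸ hprod_int (k + 2)) (hint (k + 1))
  rw [← prod_range_succ] at hsplit
  filter_upwards [hsplit, hnext] with ω hω hω'
  simp [hω, hω']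

lemma iIndepFun.measure_exists_le_prod_range_le (hZ : ∀ i, StronglyMeasurable (Z i))
    (hind : iIndepFun Z μ) (hint : ∀ i, Integrable (Z i) μ) (hmean : ∀ i, μ[Z i] = 1)
    (hnonneg : ∀ i ω, 0 ≤ Z i ω) (n : ℕ) {c : ℝ} (hc : 0 < c) :
    μ {ω | ∃ k ≤ n, c ≤ ∏ i ∈ range (k + 1), Z i ω} ≤ ENNReal.ofReal c⁻¹ := by
  have hmart := hind.martingale_prod_range hZ hint hmean
  set M := fun k => ∏ i ∈ range (k + 1), Z i
  have hM : ∀ k ω, M k ω = ∏ i ∈ range (k + 1), Z i ω := fun k ω => prod_apply ω _ _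
  have hMnonneg : 0 ≤ M := fun k ω => (hM k ω).symm ▸ prod_nonneg fun i _ => hnonneg i ω
  set S := {ω | (c.toNNReal : ℝ) ≤ (range (n + 1)).sup' nonempty_range_add_one fun k => M k ω}
  have hsub : {ω | ∃ k ≤ n, c ≤ ∏ i ∈ range (k + 1), Z i ω} ⊆ S := by
    rintro ω ⟨k, hk, hck⟩
    rw [Set.mem_ofPred_eq, Real.coe_toNNReal _ hc.le]
    exact hck.trans ((hM k ω).symm.le.trans
      (le_sup' (fun k => M k ω) (mem_range.mpr (Nat.lt_succ_of_le hk))))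
  have hdoob : (c.toNNReal : ℝ≥0∞) * μ S ≤ 1 :=
    calc (c.toNNReal : ℝ≥0∞) * μ S ≤ ENNReal.ofReal (∫ ω in S, M n ω ∂μ) :=
          maximal_ineq hmart.submartingale hMnonneg n
      _ ≤ ENNReal.ofReal (∫ ω, M n ω ∂μ) := ENNReal.ofReal_le_ofReal
          (setIntegral_le_integral (hmart.integrable n) (ae_of_all _ fun ω => hMnonneg n ω))
      _ = 1 := by
          have h := hmart.setIntegral_eq n.zero_le MeasurableSet.univ
          simp only [setIntegral_univ, M, zero_add, prod_range_one, hmean] at h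
          rw [← h, ENNReal.ofReal_one]
  calc μ {ω | ∃ k ≤ n, c ≤ ∏ i ∈ range (k + 1), Z i ω} ≤ μ S := measure_mono hsub
    _ ≤ (c.toNNReal : ℝ≥0∞)⁻¹ := ENNReal.le_inv_iff_mul_le.mpr (mul_comm (μ S) _ ▸ hdoob)
    _ = ENNReal.ofReal c⁻¹ := by rw [ENNReal.ofReal_inv_of_pos hc]; rfl

variable {Y : ℕ → Ω → ℝ}

lemma iIndepFun.measure_exists_le_mul_sum_sub_le (hY : ∀ i, Measurable (Y i))
    (hind : iIndepFun Y μ) {t m v : ℝ} (hv : 0 ≤ v)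
    (hint : ∀ i, Integrable (fun ω => exp (t * Y i ω)) μ)
    (hmgf : ∀ i, mgf (Y i) μ t ≤ exp (t * m + v)) (n : ℕ) (a : ℝ) :
    μ {ω | ∃ j ∈ Icc 1 n, a ≤ t * (∑ i ∈ range j, Y i ω - j * m)} ≤
      ENNReal.ofReal (exp (-a + n * v)) := by
  have hmgf_pos : ∀ i, 0 < mgf (Y i) μ t := fun i => mgf_pos (hint i)
  set Z : ℕ → Ω → ℝ := fun i ω => exp (t * Y i ω) / mgf (Y i) μ t
  have hZ : ∀ i, StronglyMeasurable (Z i) := fun i => by fun_prop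
  have hindZ : iIndepFun Z μ :=
    hind.comp (fun i y => exp (t * y) / mgf (Y i) μ t) fun i => by fun_prop
  have hintZ : ∀ i, Integrable (Z i) μ := fun i => (hint i).div_const _
  have hmeanZ : ∀ i, μ[Z i] = 1 := fun i => by
    rw [integral_div]
    exact div_self (hmgf_pos i).ne'
  have hZnonneg : ∀ i ω, 0 ≤ Z i ω := fun i ω => div_nonneg (exp_pos _).le (hmgf_pos i).le
  refine (measure_mono fun ω hω => ?_).trans
    ((hindZ.measure_exists_le_prod_range_le hZ hintZ hmeanZ hZnonneg (n - 1)
      (exp_pos (a - n * v))).trans_eq ?_)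
  · obtain ⟨j, hj, hja⟩ := hω
    rw [mem_Icc] at hj
    refine ⟨j - 1, by omega, ?_⟩
    rw [Nat.sub_add_cancel hj.1]
    have hjn : (j : ℝ) * v ≤ n * v := mul_le_mul_of_nonneg_right (by exact_mod_cast hj.2) hv
    calc exp (a - n * v) ≤ exp (∑ i ∈ range j, (t * Y i ω - (t * m + v))) := by
          rw [exp_le_exp, sum_sub_distrib, ← mul_sum, sum_const, card_range, nsmul_eq_mul]
          linarith
      _ = ∏ i ∈ range j, exp (t * Y i ω) / exp (t * m + v) := by simp only [exp_sum, exp_sub]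
      _ ≤ ∏ i ∈ range j, Z i ω := prod_le_prod (fun i _ => by positivity) fun i _ =>
          div_le_div_of_nonneg_left (exp_pos _).le (hmgf_pos i) (hmgf i)
  · rw [← exp_neg, neg_sub, sub_eq_neg_add]

lemma iIndepFun.measure_exists_lt_abs_sum_sub_le (hY : ∀ i, Measurable (Y i))
    (hind : iIndepFun Y μ) {s m v : ℝ} (hs : 0 ≤ s) (hv : 0 ≤ v)
    (hint : ∀ i, Integrable (fun ω => exp (s * Y i ω)) μ)
    (hint' : ∀ i, Integrable (fun ω => exp (-s * Y i ω)) μ)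
    (hmgf : ∀ i, mgf (Y i) μ s ≤ exp (s * m + v))
    (hmgf' : ∀ i, mgf (Y i) μ (-s) ≤ exp (-s * m + v)) (n : ℕ) (b : ℝ) :
    μ {ω | ∃ j ∈ Icc 1 n, b < |∑ i ∈ range j, Y i ω - j * m|} ≤
      ENNReal.ofReal (2 * exp (-(s * b) + n * v)) := by
  have hsplit : {ω | ∃ j ∈ Icc 1 n, b < |∑ i ∈ range j, Y i ω - j * m|} ⊆
      {ω | ∃ j ∈ Icc 1 n, s * b ≤ s * (∑ i ∈ range j, Y i ω - j * m)} ∪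
      {ω | ∃ j ∈ Icc 1 n, s * b ≤ -s * (∑ i ∈ range j, Y i ω - j * m)} := by
    rintro ω ⟨j, hj, hb⟩
    rcases lt_abs.mp hb with h | h
    · exact Or.inl ⟨j, hj, mul_le_mul_of_nonneg_left h.le hs⟩
    · exact Or.inr ⟨j, hj, neg_mul_comm s _ ▸ mul_le_mul_of_nonneg_left h.le hs⟩
  calc _ ≤ _ := measure_mono hsplit
    _ ≤ _ := measure_union_le _ _
    _ ≤ ENNReal.ofReal (exp (-(s * b) + n * v)) + ENNReal.ofReal (exp (-(s * b) + n * v)) :=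
      add_le_add (hind.measure_exists_le_mul_sum_sub_le hY hv hint hmgf n _)
        (hind.measure_exists_le_mul_sum_sub_le hY hv hint' hmgf' n _)
    _ = ENNReal.ofReal (2 * exp (-(s * b) + n * v)) := by
      rw [two_mul, ENNReal.ofReal_add (exp_pos _).le (exp_pos _).le]

end ProbabilityTheory

theorem stmt_10 (Ω : Type) (_ : MeasurableSpace Ω) (μ : Measure Ω)
    [IsProbabilityMeasure μ] (n : ℕ) (lam : ℝ) (hlam0 : 0 < lam) (hlam1 : lam ≤ 1)
    (X : ℕ → Ω → ℕ) (hmeas : ∀ i, Measurable (X i))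
    (hindep : ProbabilityTheory.iIndepFun X μ)
    (hgeom : ∀ i, ∀ j : ℕ, 1 ≤ j →
      μ {ω | X i ω = j} = ENNReal.ofReal (lam * (1 - lam) ^ (j - 1)))
    (ε : ℝ) (hε0 : 0 ≤ ε) (hε1 : ε ≤ 1) :
    μ {ω | ∃ j ∈ Icc 1 n,
        ε * n / lam < |(∑ i ∈ range j, (X i ω : ℝ)) - j / lam|} ≤
      ENNReal.ofReal (6 * Real.exp (-(ε ^ 2 * n) / 36)) := by
  set s := ε * lam / 3
  have hs : 0 ≤ s := by positivity
  have hs_le : s ≤ lam / 3 := by simp only [s]; nlinarith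
  have hpos := fun i => mgf_geometric_le (hgeom i) (hmeas i) hlam0 hlam1 (t := s)
    (by rwa [abs_of_nonneg hs])
  have hneg := fun i => mgf_geometric_le (hgeom i) (hmeas i) hlam0 hlam1 (t := -s)
    (by rwa [abs_neg, abs_of_nonneg hs])
  simp only [neg_div, neg_sq] at hneg
  have hY : iIndepFun (fun i ω => (X i ω : ℝ)) μ :=
    hindep.comp (fun _ => Nat.cast) fun _ => measurable_from_nat
  refine (hY.measure_exists_lt_abs_sum_sub_le (fun i => measurable_from_nat.comp (hmeas i)) hs
    (sq_nonneg (s / lam)) (fun i => (hpos i).1) (fun i => (hneg i).1) (fun i => (hpos i).2)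
    (fun i => (hneg i).2) n (ε * n / lam)).trans (ENNReal.ofReal_le_ofReal ?_)
  have hsb : s * (ε * n / lam) = ε ^ 2 * n / 3 := by simp only [s]; field_simp
  have hsl : s / lam = ε / 3 := by simp only [s]; field_simp
  have hexp : exp (-(ε ^ 2 * n / 3) + n * (ε / 3) ^ 2) ≤ exp (-(ε ^ 2 * n) / 36) := by
    rw [exp_le_exp]
    nlinarith [mul_nonneg (sq_nonneg ε) (Nat.cast_nonneg n : (0 : ℝ) ≤ n)]
  rw [hsb, hsl]
  linarith [exp_pos (-(ε ^ 2 * n) / 36)]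
end

section
/- Let (Q_t)_{t≥0} be a nonnegative integer-valued submartingale with respect to a filtration (F_t) such that sup_t E[Q_t] < ∞ and the increment Q_{t+1} − Q_t is nonzero with conditional probability bounded below by some fixed p > 0 at every time step. Then a contradiction follows; i.e., no such process exists. Equivalently: a nonnegative integer-valued submartingale whose increments are nonzero with conditional probability at least p > 0 at every step satisfies sup_t E[Q_t] = ∞. -/
/-! By Lévy's extension of the Borel–Cantelli lemma, the conditional jump probabilities, being at
least `p` at every step, sum to infinity, so almost surely `Q` jumps infinitely often; as `Q` is
integer-valued, each jump has size at least `1`. On the other hand a nonnegative submartingale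
with bounded expectations is bounded in `L¹` and hence converges almost surely, and a convergent
integer-valued sequence is eventually constant. -/

open MeasureTheory Filter Topology

theorem eventually_succ_eq_of_tendsto_of_forall_int {u : ℕ → ℝ} {c : ℝ}
    (hu : Tendsto u atTop (𝓝 c)) (hint : ∀ n, ∃ k : ℤ, u n = k) :
    ∀ᶠ n in atTop, u (n + 1) = u n := by
  have hdiff : Tendsto (fun n => u (n + 1) - u n) atTop (𝓝 0) := by
    simpa using ((tendsto_add_atTop_iff_nat 1).mpr hu).sub hu
  filter_upwards [(Metric.tendsto_nhds.mp hdiff) 1 one_pos] with n hn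
  obtain ⟨a, ha⟩ := hint (n + 1)
  obtain ⟨b, hb⟩ := hint n
  rw [Real.dist_0_eq_abs, ha, hb, ← Int.cast_sub, ← Int.cast_abs, ← Int.cast_one,
    Int.cast_lt, Int.abs_lt_one_iff, sub_eq_zero] at hn
  rw [ha, hb, hn]

theorem eLpNorm_one_eq_ofReal_integral {Ω : Type*} {m : MeasurableSpace Ω} {μ : Measure Ω}
    {f : Ω → ℝ} (hf : Integrable f μ) (hnonneg : ∀ ω, 0 ≤ f ω) :
    eLpNorm f 1 μ = ENNReal.ofReal (∫ ω, f ω ∂μ) := by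
  rw [eLpNorm_one_eq_lintegral_enorm, ← ofReal_integral_norm_eq_lintegral_enorm hf]
  simp only [Real.norm_of_nonneg (hnonneg _)]

theorem ae_frequently_mem_of_le_condExp_indicator {Ω : Type*} {m : MeasurableSpace Ω}
    {μ : Measure Ω} [IsFiniteMeasure μ] {F : Filtration ℕ m} {s : ℕ → Set Ω}
    (hs : ∀ n, MeasurableSet[F (n + 1)] (s n)) {p : ℝ} (hp : 0 < p)
    (hcond : ∀ n, ∀ᵐ ω ∂μ, p ≤ μ[(s n).indicator (1 : Ω → ℝ) | F n] ω) :
    ∀ᵐ ω ∂μ, ∃ᶠ n in atTop, ω ∈ s n := by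
  -- Lévy's lemma is stated for sets `s' n ∈ F n`, conditioned one step back.
  let s' : ℕ → Set Ω := fun
    | 0 => ∅
    | n + 1 => s n
  have hs' : ∀ n, MeasurableSet[F n] (s' n) := fun
    | 0 => @MeasurableSet.empty _ (F 0)
    | n + 1 => hs n
  filter_upwards [ae_mem_limsup_atTop_iff μ hs', ae_all_iff.mpr hcond] with ω hlevy hω
  have hsum : Tendsto
      (fun n => ∑ k ∈ Finset.range n, μ[(s k).indicator (1 : Ω → ℝ) | F k] ω) atTop atTop := by
    refine tendsto_atTop_mono (fun n => ?_)
      ((tendsto_natCast_atTop_atTop (R := ℝ)).atTop_mul_const hp)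
    calc (n : ℝ) * p = ∑ _k ∈ Finset.range n, p := by simp
      _ ≤ _ := Finset.sum_le_sum fun k _ => hω k
  have hshift : limsup s atTop = limsup s' atTop := limsup_nat_add s' 1
  rw [← mem_limsup_iff_frequently_mem, hshift]
  exact hlevy.mpr hsum

theorem stmt_19 (Ω : Type) (m : MeasurableSpace Ω) (μ : Measure Ω)
    [IsProbabilityMeasure μ] (F : Filtration ℕ m)
    (Q : ℕ → Ω → ℝ) (hsub : Submartingale Q F μ)
    (hnonneg : ∀ t ω, 0 ≤ Q t ω)
    (hint : ∀ t ω, ∃ k : ℕ, Q t ω = k)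
    (p : ℝ) (hp : 0 < p)
    (hjump : ∀ t, ∀ᵐ ω ∂μ,
      p ≤ (μ[Set.indicator {ω' | Q (t + 1) ω' ≠ Q t ω'} (fun _ => (1 : ℝ)) | F t]) ω) :
    ¬ ∃ C : ℝ, ∀ t : ℕ, ∫ ω, Q t ω ∂μ ≤ C := by
  rintro ⟨C, hC⟩
  have hL1 : ∀ t, eLpNorm (Q t) 1 μ ≤ ENNReal.ofReal C := fun t => by
    rw [eLpNorm_one_eq_ofReal_integral (hsub.integrable t) (hnonneg t)]
    exact ENNReal.ofReal_le_ofReal (hC t)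
  have hjump_meas : ∀ t, MeasurableSet[F (t + 1)] {ω | Q (t + 1) ω ≠ Q t ω} := fun t =>
    (measurableSet_eq_fun (hsub.stronglyAdapted (t + 1)).measurable
      ((hsub.stronglyAdapted t).mono (F.mono t.le_succ)).measurable).compl
  have hfalse : ∀ᵐ ω ∂μ, False := by
    filter_upwards [hsub.exists_ae_tendsto_of_bdd hL1,
      ae_frequently_mem_of_le_condExp_indicator hjump_meas hp hjump] with ω ⟨c, hc⟩ hfreq
    have hconst := eventually_succ_eq_of_tendsto_of_forall_int hc fun t => by
      obtain ⟨k, hk⟩ := hint t ω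
      exact ⟨k, by simp [hk]⟩
    obtain ⟨t, hne, heq⟩ := (hfreq.and_eventually hconst).exists
    exact hne heq
  exact hfalse.exists.elim fun _ => id
end
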